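/- Let H be symmetric positive definite, w* ∈ ℝ^d, i an index, and let w' = w* + δ* where δ* = −(w*_i/(H⁻¹)_{ii}) H⁻¹e_i is the OBS update after pruning weight i. Then for any other vector w'' with w''_i = 0, (1/2)(w''−w*)ᵀH(w''−w*) ≥ (1/2)(w'−w*)ᵀH(w'−w*) = w*_i²/(2(H⁻¹)_{ii}), with equality iff w'' = w'. -/

import Mathlib

open Matrix

/-!
Write `Q x = x ⬝ᵥ H *ᵥ x`. The OBS step `δ* = c • H⁻¹ eᵢ` satisfies `z ⬝ᵥ H *ᵥ δ* = c * zᵢ` for every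
`z`, so it is `H`-orthogonal to the hyperplane `{zᵢ = 0}`, and `c` is chosen so that `δ*ᵢ = -wᵢ`.
Any admissible `w''` splits as `w'' - w = δ* + u` with `uᵢ = 0`, hence
`Q (w'' - w) = Q δ* + Q u ≥ Q δ* = wᵢ² / (H⁻¹)ᵢᵢ`, with equality iff `u = 0` by positive definiteness.
-/

namespace Matrix

variable {n R : Type*} [Fintype n]

section CommRing

variable [CommRing R]

lemma IsSymm.dotProduct_mulVec_comm {H : Matrix n n R} (hH : H.IsSymm) (x y : n → R) :
    x ⬝ᵥ H *ᵥ y = y ⬝ᵥ H *ᵥ x := by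
  rw [dotProduct_mulVec, ← mulVec_transpose, hH.eq, dotProduct_comm]

lemma IsSymm.add_dotProduct_mulVec_add {H : Matrix n n R} (hH : H.IsSymm) {x y : n → R}
    (hxy : y ⬝ᵥ H *ᵥ x = 0) :
    (x + y) ⬝ᵥ H *ᵥ (x + y) = x ⬝ᵥ H *ᵥ x + y ⬝ᵥ H *ᵥ y := by
  rw [mulVec_add, add_dotProduct, dotProduct_add, dotProduct_add, hH.dotProduct_mulVec_comm x y,
    hxy]
  ring

lemma dotProduct_mulVec_inv_mulVec_single [DecidableEq n] {H : Matrix n n R} (hH : IsUnit H.det)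
    (z : n → R) (i : n) : z ⬝ᵥ H *ᵥ (H⁻¹ *ᵥ Pi.single i 1) = z i := by
  rw [mulVec_mulVec, mul_nonsing_inv _ hH, one_mulVec, dotProduct_single, mul_one]

end CommRing

lemma PosDef.star_dotProduct_mulVec_self_eq_zero_iff [CommRing R] [PartialOrder R] [StarRing R]
    {H : Matrix n n R} (hH : H.PosDef) (x : n → R) : star x ⬝ᵥ H *ᵥ x = 0 ↔ x = 0 :=
  ⟨fun h => by_contra fun hx => (hH.dotProduct_mulVec_pos hx).ne' h, by rintro rfl; simp⟩

end Matrix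

/-- Optimality and uniqueness of the OBS single-weight update: among all vectors
`w''` with `w''ᵢ = 0`, the OBS-updated vector `w' = w* + δ*` uniquely minimizes
the quadratic loss increase `(1/2)(w - w*)ᵀ H (w - w*)`, whose value at `w'` is
`w*ᵢ² / (2 (H⁻¹)ᵢᵢ)`. -/
theorem obs_update_optimal_unique {d : ℕ} (H : Matrix (Fin d) (Fin d) ℝ)
    (hH : H.PosDef) (w : Fin d → ℝ) (i : Fin d) :
    let δstar : Fin d → ℝ := (-(w i / H⁻¹ i i)) • H⁻¹.mulVec (Pi.single i 1)
    let w' : Fin d → ℝ := w + δstar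
    (1 / 2 : ℝ) * ((w' - w) ⬝ᵥ H.mulVec (w' - w)) = (w i) ^ 2 / (2 * H⁻¹ i i) ∧
    ∀ w'' : Fin d → ℝ, w'' i = 0 →
      ((w i) ^ 2 / (2 * H⁻¹ i i) ≤ (1 / 2 : ℝ) * ((w'' - w) ⬝ᵥ H.mulVec (w'' - w)) ∧
        ((1 / 2 : ℝ) * ((w'' - w) ⬝ᵥ H.mulVec (w'' - w)) =
            (w i) ^ 2 / (2 * H⁻¹ i i) ↔ w'' = w')) := by
  intro δ w'
  have hdiag : 0 < H⁻¹ i i := hH.inv.diag_pos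
  have horth : ∀ z, z ⬝ᵥ H *ᵥ δ = -(w i / H⁻¹ i i) * z i := fun z => by
    rw [mulVec_smul, dotProduct_smul, smul_eq_mul,
      dotProduct_mulVec_inv_mulVec_single ((isUnit_iff_isUnit_det H).mp hH.isUnit)]
  have hδi : δ i = -w i := by
    simp [δ, div_mul_cancel₀ _ hdiag.ne']
  have hδ : δ ⬝ᵥ H *ᵥ δ = w i ^ 2 / H⁻¹ i i := by
    rw [horth, hδi]
    field_simp
  refine ⟨by rw [show w' - w = δ from add_sub_cancel_left w δ, hδ]; ring, fun w'' hw'' => ?_⟩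
  set u := w'' - w'
  have hu_orth : u ⬝ᵥ H *ᵥ δ = 0 := by simp [horth, u, w', hw'', hδi]
  have hQu := hH.star_dotProduct_mulVec_self_eq_zero_iff u
  have hQu_nonneg := hH.posSemidef.dotProduct_mulVec_nonneg u
  simp only [star_trivial] at hQu hQu_nonneg
  rw [show w'' - w = δ + u by simp only [u, w']; abel,
    (isHermitian_iff_isSymm.mp hH.isHermitian).add_dotProduct_mulVec_add hu_orth, hδ,
    show w'' = w' ↔ u = 0 from sub_eq_zero.symm, ← hQu,
    show w i ^ 2 / (2 * H⁻¹ i i) = 1 / 2 * (w i ^ 2 / H⁻¹ i i) by ring]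
  constructor
  · linarith
  · constructor <;> intro h <;> linarith
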